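/- Every generalized Sahlqvist formula φ has a local first-order correspondent which is a generalized Kracht formula: there exists a generalized Kracht formula α(x_0) (read via the # translation of its atoms) such that for every Kripke frame F and every point w, F, w ⊨ φ under every valuation if and only if F ⊨ α[w]. -/

import Mathlib

set_option autoImplicit true

universe u v w

/-- Modal formulas over modality indices `Λ` and propositional variables `V`. -/
inductive MF (Λ : Type u) (V : Type v) : Type (max u v)
  | var : V → MF Λ V
  | top : MF Λ V
  | bot : MF Λ V
  | and : MF Λ V → MF Λ V → MF Λ V
  | or  : MF Λ V → MF Λ V → MF Λ V
  | neg : MF Λ V → MF Λ V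
  | imp : MF Λ V → MF Λ V → MF Λ V
  | dia : Λ → MF Λ V → MF Λ V
  | box : Λ → MF Λ V → MF Λ V

namespace MF
variable {Λ : Type u} {V : Type v}

/-- The set of propositional variables occurring in a modal formula. -/
def vars : MF Λ V → Set V
  | var p => {p}
  | top => ∅
  | bot => ∅
  | and a b => vars a ∪ vars b
  | or a b => vars a ∪ vars b
  | neg a => vars a
  | imp a b => vars a ∪ vars b
  | dia _ a => vars a
  | box _ a => vars a

end MF

/-- Positive modal formulas: built without `¬` and `→`. -/
inductive Positive {Λ : Type u} {V : Type v} : MF Λ V → Prop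
  | var (p : V) : Positive (.var p)
  | top : Positive .top
  | bot : Positive .bot
  | and {a b} : Positive a → Positive b → Positive (.and a b)
  | or {a b} : Positive a → Positive b → Positive (.or a b)
  | dia (l) {a} : Positive a → Positive (.dia l a)
  | box (l) {a} : Positive a → Positive (.box l a)

/-- A Kripke frame with accessibility relations indexed by `Λ`. -/
structure Frame (Λ : Type u) where
  W : Type w
  R : Λ → W → W → Prop

/-- Kripke satisfaction `F, x, θ ⊨ φ`. -/
def sat {Λ : Type u} {V : Type v} (F : Frame Λ) (θ : V → Set F.W) : F.W → MF Λ V → Prop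
  | x, .var p => x ∈ θ p
  | _, .top => True
  | _, .bot => False
  | x, .and a b => sat F θ x a ∧ sat F θ x b
  | x, .or a b => sat F θ x a ∨ sat F θ x b
  | x, .neg a => ¬ sat F θ x a
  | x, .imp a b => sat F θ x a → sat F θ x b
  | x, .dia l a => ∃ y, F.R l x y ∧ sat F θ y a
  | x, .box l a => ∀ y, F.R l x y → sat F θ y a

/-- `BoxF φ p S`: `φ` is a box-formula with head `p`, in which the set of variables
occurring not as the head is `S`. -/
inductive BoxF {Λ : Type u} {V : Type v} : MF Λ V → V → Set V → Prop
  | var (p : V) : BoxF (.var p) p ∅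
  | imp {POS ψ p S} : Positive POS → BoxF ψ p S → BoxF (.imp POS ψ) p (MF.vars POS ∪ S)
  | box (l) {ψ p S} : BoxF ψ p S → BoxF (.box l ψ) p S

/-- `RegBF r φ p`: relative to the rank assignment `r`, `φ` is a regular box-formula
with head `p` (of rank `r p`): all variables of the positive antecedents have rank `< r p`. -/
inductive RegBF {Λ : Type u} {V : Type v} (r : V → ℕ) : MF Λ V → V → Prop
  | var (p : V) : RegBF r (.var p) p
  | imp {POS ψ p} : Positive POS → (∀ q ∈ MF.vars POS, r q < r p) →
      RegBF r ψ p → RegBF r (.imp POS ψ) p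
  | box (l) {ψ p} : RegBF r ψ p → RegBF r (.box l ψ) p

/-- The edge relation of the dependency graph of a set `A` of box-formulas:
`p → q` iff `p` occurs (not as the head) in some member of `A` with head `q`. -/
def depEdge {Λ : Type u} {V : Type v} (A : Set (MF Λ V)) (p q : V) : Prop :=
  ∃ φ ∈ A, ∃ S, BoxF φ q S ∧ p ∈ S

/-- A set of box-formulas is regular if its dependency graph has no oriented cycle. -/
def RegularSet {Λ : Type u} {V : Type v} (A : Set (MF Λ V)) : Prop :=
  ∀ p : V, ¬ Relation.TransGen (depEdge A) p p

/-- `R_λ^{-1}(A) = {u : ∃ v, u R_λ v ∧ v ∈ A}`. -/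
def Rinv {Λ : Type u} (F : Frame Λ) (l : Λ) (A : Set F.W) : Set F.W :=
  {u | ∃ v, F.R l u v ∧ v ∈ A}

/-- `R_λ^□(A) = {u : ∀ v, u R_λ v → v ∈ A}`. -/
def RboxOp {Λ : Type u} (F : Frame Λ) (l : Λ) (A : Set F.W) : Set F.W :=
  {u | ∀ v, F.R l u v → v ∈ A}

/-- `R_λ(A) = {u : ∃ v, v R_λ u ∧ v ∈ A}`. -/
def Rfwd {Λ : Type u} (F : Frame Λ) (l : Λ) (A : Set F.W) : Set F.W :=
  {u | ∃ v, F.R l v u ∧ v ∈ A}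

/-- The interpretation of the expression `KP^{POS}` in a frame `F`, the set variables
`P^l_i` being interpreted by `P`.  (Junk value `∅` on non-positive constructors.) -/
def KPsem {Λ : Type u} (F : Frame Λ) (P : ℕ × ℕ → Set F.W) : MF Λ (ℕ × ℕ) → Set F.W
  | .var q => P q
  | .top => Set.univ
  | .bot => ∅
  | .and a b => KPsem F P a ∩ KPsem F P b
  | .or a b => KPsem F P a ∪ KPsem F P b
  | .dia l a => Rinv F l (KPsem F P a)
  | .box l a => RboxOp F l (KPsem F P a)
  | .neg _ => ∅
  | .imp _ _ => ∅

/-- The interpretation of the expression `KV^φ` in a frame `F`: the set variables `P^l_i`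
are interpreted by `P` and the extra variable `#` by the second argument.
(Junk value `∅` on constructors that do not occur in regular box-formulas.) -/
def KVsem {Λ : Type u} (F : Frame Λ) (P : ℕ × ℕ → Set F.W) : MF Λ (ℕ × ℕ) → Set F.W → Set F.W
  | .var _, X => X
  | .imp POS ψ, X => KVsem F P ψ (X ∩ KPsem F P POS)
  | .box l ψ, X => KVsem F P ψ (Rfwd F l X)
  | _, _ => ∅

/-- The semantic minimal valuation: given points `g j` and sets `f j` of regular
box-formulas to be verified at `g j`, `thetaMinSem F g f k i` is the minimal value of the
variable `p^k_i`; it is defined by recursion on the rank `k` as the union, over all `j` and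
all `φ ∈ f j` with head `p^k_i`, of `KV^φ(g j)` computed with the minimal values of the
variables of lower rank. -/
noncomputable def thetaMinSem {Λ : Type u} (F : Frame Λ) {ι : Type w} (g : ι → F.W)
    (f : ι → Set (MF Λ (ℕ × ℕ))) : ℕ → ℕ → Set F.W :=
  fun k => Nat.strongRecOn (motive := fun _ => ℕ → Set F.W) k fun k ih i =>
    ⋃ (j : ι), ⋃ φ ∈ f j, ⋃ (_ : RegBF Prod.fst φ (k, i)),
      KVsem F (fun q => if h : q.1 < k then ih q.1 h q.2 else ∅) φ {g j}

/-- `L`-expressions: terms of the language `L` with individual variables `x_i` (`i : ℕ`),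
constants `⊤, ⊥`, unary `R_λ^{-1}`, `R_λ^□`, `R_λ` and binary `∩`, `∪`. -/
inductive LExp (Λ : Type u) : Type u
  | var : ℕ → LExp Λ
  | top : LExp Λ
  | bot : LExp Λ
  | inter : LExp Λ → LExp Λ → LExp Λ
  | union : LExp Λ → LExp Λ → LExp Λ
  | rinv : Λ → LExp Λ → LExp Λ
  | rbox : Λ → LExp Λ → LExp Λ
  | rfw : Λ → LExp Λ → LExp Λ

namespace LExp
variable {Λ : Type u}

/-- Denotation of an `L`-expression in a frame `F`, the variable `x_i` denoting the
singleton of the point `g i`. -/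
def den (F : Frame Λ) (g : ℕ → F.W) : LExp Λ → Set F.W
  | var i => {g i}
  | top => Set.univ
  | bot => ∅
  | inter a b => den F g a ∩ den F g b
  | union a b => den F g a ∪ den F g b
  | rinv l a => Rinv F l (den F g a)
  | rbox l a => RboxOp F l (den F g a)
  | rfw l a => Rfwd F l (den F g a)

/-- The set of (indices of) individual variables occurring in an `L`-expression. -/
def evars : LExp Λ → Set ℕ
  | var i => {i}
  | top => ∅
  | bot => ∅
  | inter a b => evars a ∪ evars b
  | union a b => evars a ∪ evars b
  | rinv _ a => evars a
  | rbox _ a => evars a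
  | rfw _ a => evars a

end LExp

/-- The subexpression relation on `L`-expressions. -/
inductive Subexp {Λ : Type u} : LExp Λ → LExp Λ → Prop
  | refl (e : LExp Λ) : Subexp e e
  | interL {e a b} : Subexp e a → Subexp e (.inter a b)
  | interR {e a b} : Subexp e b → Subexp e (.inter a b)
  | unionL {e a b} : Subexp e a → Subexp e (.union a b)
  | unionR {e a b} : Subexp e b → Subexp e (.union a b)
  | rinv (l) {e a} : Subexp e a → Subexp e (.rinv l a)
  | rbox (l) {e a} : Subexp e a → Subexp e (.rbox l a)
  | rfw (l) {e a} : Subexp e a → Subexp e (.rfw l a)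

/-- `SafeFor e`: `e` is "safe for" the ambient expression, i.e. `e` is a variable, or
`R_λ(e')` with `e'` safe for it, or an intersection one of whose components is safe for it. -/
inductive SafeFor {Λ : Type u} : LExp Λ → Prop
  | var (i : ℕ) : SafeFor (.var i)
  | rfw (l) {a} : SafeFor a → SafeFor (.rfw l a)
  | interL {a b} : SafeFor a → SafeFor (.inter a b)
  | interR {a b} : SafeFor b → SafeFor (.inter a b)

/-- An `L`-expression is safe if it is safe for itself and the argument of every
subexpression of the form `R_λ(ψ)` is safe for it. -/
def Safe {Λ : Type u} (e : LExp Λ) : Prop :=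
  SafeFor e ∧ ∀ l a, Subexp (.rfw l a) e → SafeFor a

mutual
  /-- The class `K`: the least class of `L`-expressions containing the variables and closed
  under `S ↦ R_λ(S)` and `S ↦ S ∩ E` for `E` a positive combination of members of `K`. -/
  inductive InK {Λ : Type u} : LExp Λ → Prop
    | var (i : ℕ) : InK (.var i)
    | rfw (l : Λ) {S : LExp Λ} : InK S → InK (.rfw l S)
    | inter {S E : LExp Λ} : InK S → PosOfK E → InK (.inter S E)
  /-- Positive combinations of members of `K`: built from members of `K` using only
  `∩`, `∪`, `R_λ^{-1}`, `R_λ^□`, `⊤`, `⊥`. -/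
  inductive PosOfK {Λ : Type u} : LExp Λ → Prop
    | ofK {e : LExp Λ} : InK e → PosOfK e
    | top : PosOfK .top
    | bot : PosOfK .bot
    | inter {a b} : PosOfK a → PosOfK b → PosOfK (.inter a b)
    | union {a b} : PosOfK a → PosOfK b → PosOfK (.union a b)
    | rinv (l) {a} : PosOfK a → PosOfK (.rinv l a)
    | rbox (l) {a} : PosOfK a → PosOfK (.rbox l a)
end

/-- Quasi-safe `L`-expressions: positive combinations of safe expressions, i.e. built from
safe expressions using only `∩`, `∪`, `R_λ^{-1}`, `R_λ^□`, `⊤`, `⊥`. -/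
inductive QuasiSafe {Λ : Type u} : LExp Λ → Prop
  | safe {e : LExp Λ} : Safe e → QuasiSafe e
  | top : QuasiSafe .top
  | bot : QuasiSafe .bot
  | inter {a b} : QuasiSafe a → QuasiSafe b → QuasiSafe (.inter a b)
  | union {a b} : QuasiSafe a → QuasiSafe b → QuasiSafe (.union a b)
  | rinv (l) {a} : QuasiSafe a → QuasiSafe (.rinv l a)
  | rbox (l) {a} : QuasiSafe a → QuasiSafe (.rbox l a)

/-- `ReplOne i ψ φ φ'`: `φ'` is the result of replacing one occurrence of the variable
`x_i` in `φ` by `ψ`. -/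
inductive ReplOne {Λ : Type u} (i : ℕ) (ψ : LExp Λ) : LExp Λ → LExp Λ → Prop
  | here : ReplOne i ψ (.var i) ψ
  | interL {a a' b} : ReplOne i ψ a a' → ReplOne i ψ (.inter a b) (.inter a' b)
  | interR {a b b'} : ReplOne i ψ b b' → ReplOne i ψ (.inter a b) (.inter a b')
  | unionL {a a' b} : ReplOne i ψ a a' → ReplOne i ψ (.union a b) (.union a' b)
  | unionR {a b b'} : ReplOne i ψ b b' → ReplOne i ψ (.union a b) (.union a b')
  | rinv (l) {a a'} : ReplOne i ψ a a' → ReplOne i ψ (.rinv l a) (.rinv l a')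
  | rbox (l) {a a'} : ReplOne i ψ a a' → ReplOne i ψ (.rbox l a) (.rbox l a')
  | rfw (l) {a a'} : ReplOne i ψ a a' → ReplOne i ψ (.rfw l a) (.rfw l a')

/-- A finite union of `L`-expressions (empty union is `⊥`). -/
def unionList {Λ : Type u} : List (LExp Λ) → LExp Λ
  | [] => .bot
  | e :: es => .union e (unionList es)

/-- `UnionOfSafe e`: `e` is a finite union of safe expressions. -/
inductive UnionOfSafe {Λ : Type u} : LExp Λ → Prop
  | bot : UnionOfSafe .bot
  | safe {e : LExp Λ} : Safe e → UnionOfSafe e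
  | union {a b} : UnionOfSafe a → UnionOfSafe b → UnionOfSafe (.union a b)

/-- Syntactic `KP^{POS}`: the `L`-expression obtained from the positive formula `POS` by
replacing each set variable `P^l_i` by the `L`-expression `KF (l, i)`.
(Junk value on non-positive constructors.) -/
def KPsub {Λ : Type u} (KF : ℕ × ℕ → LExp Λ) : MF Λ (ℕ × ℕ) → LExp Λ
  | .var q => KF q
  | .top => .top
  | .bot => .bot
  | .and a b => .inter (KPsub KF a) (KPsub KF b)
  | .or a b => .union (KPsub KF a) (KPsub KF b)
  | .dia l a => .rinv l (KPsub KF a)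
  | .box l a => .rbox l (KPsub KF a)
  | .neg _ => .bot
  | .imp _ _ => .bot

/-- Syntactic `KVF^φ(t)`: the `L`-expression obtained from `KV^φ` by substituting the
`L`-expression `t` for `#` and `KF (l, i)` for each set variable `P^l_i`.
(Junk value on constructors that do not occur in regular box-formulas.) -/
def KVFsyn {Λ : Type u} (KF : ℕ × ℕ → LExp Λ) : MF Λ (ℕ × ℕ) → LExp Λ → LExp Λ
  | .var _, t => t
  | .imp POS ψ, t => KVFsyn KF ψ (.inter t (KPsub KF POS))
  | .box l ψ, t => KVFsyn KF ψ (.rfw l t)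
  | _, _ => .bot

open scoped Classical in
/-- The syntactic minimal valuation `KF_f^{p^k_i}` for variables `x_0, …, x_{n-1}` and
`f` assigning to each variable a finite set of regular box-formulas: defined by recursion on
the rank `k` as the union, over all `j < n` and all `φ ∈ f j` with head `p^k_i`, of
`KVF_f^φ(x_j)`, which is `KV^φ` with `x_j` substituted for `#` and `KF_f^{p^l_m}`
substituted for each `P^l_m` with `l < k`. -/
noncomputable def KFsyn {Λ : Type u} (n : ℕ) (f : ℕ → Finset (MF Λ (ℕ × ℕ))) :
    ℕ → ℕ → LExp Λ :=
  fun k => Nat.strongRecOn (motive := fun _ => ℕ → LExp Λ) k fun k ih i =>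
    unionList (((List.range n).flatMap fun j =>
      ((f j).toList.filter fun φ => decide (RegBF Prod.fst φ (k, i))).map fun φ =>
        KVFsyn (fun q => if h : q.1 < k then ih q.1 h q.2 else LExp.bot) φ (LExp.var j)))

/-- The expressions substituted for the set variables `P^l_m`, `l < k`, in `KVF`:
the syntactic minimal valuations of the lower ranks. -/
noncomputable def lowKF {Λ : Type u} (n : ℕ) (f : ℕ → Finset (MF Λ (ℕ × ℕ))) (k : ℕ) :
    ℕ × ℕ → LExp Λ :=
  fun q => if q.1 < k then KFsyn n f q.1 q.2 else LExp.bot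

/-- `KVFat n f φ j k` is the `L`-expression `KVF_f^φ(x_j)` for `φ` a regular box-formula
of rank `k`. -/
noncomputable def KVFat {Λ : Type u} (n : ℕ) (f : ℕ → Finset (MF Λ (ℕ × ℕ)))
    (φ : MF Λ (ℕ × ℕ)) (j k : ℕ) : LExp Λ :=
  KVFsyn (lowKF n f k) φ (.var j)

/-- A labelled tree-like structure: a set of vertices with relations indexed by `Λ`,
a root, and a label function assigning to every vertex a set of labels from `α`. -/
structure LabTree (Λ : Type u) (α : Type v) where
  V : Type
  R : Λ → V → V → Prop
  root : V
  label : V → Set α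

/-- Derivation trees witnessing that a formula is built from base formulas using only
`∧` and `◇_λ`. -/
inductive BuiltT (Λ : Type u) (V : Type v) : Type (max u v)
  | base : MF Λ V → BuiltT Λ V
  | and : BuiltT Λ V → BuiltT Λ V → BuiltT Λ V
  | dia : Λ → BuiltT Λ V → BuiltT Λ V

/-- The modal formula described by a derivation tree. -/
def BuiltT.formula {Λ : Type u} {V : Type v} : BuiltT Λ V → MF Λ V
  | base φ => φ
  | and a b => .and a.formula b.formula
  | dia l a => .dia l a.formula

/-- The derivation tree uses only base formulas from `A`. -/
def BuiltT.Ok {Λ : Type u} {V : Type v} (A : Set (MF Λ V)) : BuiltT Λ V → Prop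
  | base φ => φ ∈ A
  | and a b => a.Ok A ∧ b.Ok A
  | dia _ a => a.Ok A

/-- Helper for gluing two labelled trees at their roots: the relation on the disjoint sum,
with the edges out of the second root re-attached to the first root. -/
def glueR {Λ : Type u} {W₁ W₂ : Type} (R₁ : Λ → W₁ → W₁ → Prop) (R₂ : Λ → W₂ → W₂ → Prop)
    (r₁ : W₁) (r₂ : W₂) (l : Λ) : W₁ ⊕ W₂ → W₁ ⊕ W₂ → Prop
  | Sum.inl a, Sum.inl b => R₁ l a b
  | Sum.inr a, Sum.inr b => R₂ l a b
  | Sum.inl a, Sum.inr b => a = r₁ ∧ R₂ l r₂ b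
  | Sum.inr _, Sum.inl _ => False

open Classical in
/-- Helper for gluing two labelled trees at their roots: the label function, the glued root
receiving the union of the two root labels. -/
noncomputable def glueLab {α : Type w} {W₁ W₂ : Type} (L₁ : W₁ → Set α) (L₂ : W₂ → Set α)
    (r₁ : W₁) (r₂ : W₂) : W₁ ⊕ W₂ → Set α
  | Sum.inl a => if a = r₁ then L₁ r₁ ∪ L₂ r₂ else L₁ a
  | Sum.inr b => L₂ b

/-- Helper for prefixing a labelled tree with a new root: the relation on `Option W`,
with an `R_{l₀}`-edge from the new root `none` to the old root `r`. -/
def prefR {Λ : Type u} {W : Type} (R : Λ → W → W → Prop) (l₀ : Λ) (r : W) (l : Λ) :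
    Option W → Option W → Prop
  | none, some w => l = l₀ ∧ w = r
  | some a, some b => R l a b
  | _, _ => False

/-- Helper for prefixing a labelled tree with a new root: the label function, the new root
getting the empty label. -/
def prefLab {α : Type w} {W : Type} (L : W → Set α) : Option W → Set α
  | none => ∅
  | some a => L a

/-- The reduced syntactical tree of a formula built from base formulas using `∧` and `◇_λ`:
a single root labelled `{a}` for a base formula `a`; for a conjunction, the two trees
with their roots identified (labels united); for `◇_λ ψ`, a new root with empty label and an
`R_λ`-edge to the root of the tree of `ψ`. -/
noncomputable def TreeOf {Λ : Type u} {V : Type v} : BuiltT Λ V → LabTree Λ (MF Λ V)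
  | .base φ =>
      { V := Unit, R := fun _ _ _ => False, root := (), label := fun _ => {φ} }
  | .and b₁ b₂ =>
      let T₁ := TreeOf b₁
      let T₂ := TreeOf b₂
      { V := {v : T₁.V ⊕ T₂.V // v ≠ Sum.inr T₂.root},
        R := fun l u v => glueR T₁.R T₂.R T₁.root T₂.root l u.1 v.1,
        root := ⟨Sum.inl T₁.root, by exact Sum.inl_ne_inr⟩,
        label := fun v => glueLab T₁.label T₂.label T₁.root T₂.root v.1 }
  | .dia l b =>
      let T := TreeOf b
      { V := Option T.V,
        R := fun l' u v => prefR T.R l T.root l' u v,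
        root := none,
        label := fun v => prefLab T.label v }

/-- Restrictedly positive first-order formulas over the frame language: built from atoms
`y ∈ E` (`E` an `L`-expression) using `∧`, `∨` and the restricted quantifiers
`(∀ y ◁_λ x)` and `(∃ y ◁_λ x)`. -/
inductive KrF (Λ : Type u) : Type u
  | atom : ℕ → LExp Λ → KrF Λ
  | and : KrF Λ → KrF Λ → KrF Λ
  | or : KrF Λ → KrF Λ → KrF Λ
  | all : ℕ → Λ → ℕ → KrF Λ → KrF Λ
  | ex : ℕ → Λ → ℕ → KrF Λ → KrF Λ

namespace KrF
variable {Λ : Type u}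

/-- Truth of a restrictedly positive formula in a frame under an assignment `g` of points to
individual variables; the atom `y ∈ E` is read via the `#`-translation, i.e. as membership
of `g y` in the denotation of `E`. -/
def holds (F : Frame Λ) : (ℕ → F.W) → KrF Λ → Prop
  | g, atom y E => g y ∈ E.den F g
  | g, and a b => holds F g a ∧ holds F g b
  | g, or a b => holds F g a ∨ holds F g b
  | g, all y l x β => ∀ w, F.R l (g x) w → holds F (Function.update g y w) β
  | g, ex y l x β => ∃ w, F.R l (g x) w ∧ holds F (Function.update g y w) β

/-- Free variables. -/
def fv : KrF Λ → Set ℕ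
  | atom y E => insert y E.evars
  | and a b => fv a ∪ fv b
  | or a b => fv a ∪ fv b
  | all y _ x β => insert x (fv β \ {y})
  | ex y _ x β => insert x (fv β \ {y})

/-- Bound variables. -/
def bv : KrF Λ → Set ℕ
  | atom _ _ => ∅
  | and a b => bv a ∪ bv b
  | or a b => bv a ∪ bv b
  | all y _ _ β => insert y (bv β)
  | ex y _ _ β => insert y (bv β)

/-- No two distinct quantifier occurrences bind the same variable. -/
def CleanBound : KrF Λ → Prop
  | atom _ _ => True
  | and a b => CleanBound a ∧ CleanBound b ∧ bv a ∩ bv b = ∅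
  | or a b => CleanBound a ∧ CleanBound b ∧ bv a ∩ bv b = ∅
  | all y _ _ β => CleanBound β ∧ y ∉ bv β
  | ex y _ _ β => CleanBound β ∧ y ∉ bv β

/-- Clean formulas: no variable occurs both free and bound, and no two distinct quantifier
occurrences bind the same variable. -/
def Clean (φ : KrF Λ) : Prop := fv φ ∩ bv φ = ∅ ∧ CleanBound φ

/-- All the `L`-expressions occurring in atoms of the formula satisfy `P`. -/
def AtomsAll (P : LExp Λ → Prop) : KrF Λ → Prop
  | atom _ E => P E
  | and a b => AtomsAll P a ∧ AtomsAll P b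
  | or a b => AtomsAll P a ∧ AtomsAll P b
  | all _ _ _ β => AtomsAll P β
  | ex _ _ _ β => AtomsAll P β

/-- Quantifier-free formulas (built from atoms using only `∧` and `∨`). -/
def QFree : KrF Λ → Prop
  | atom _ _ => True
  | and a b => QFree a ∧ QFree b
  | or a b => QFree a ∧ QFree b
  | all _ _ _ _ => False
  | ex _ _ _ _ => False

/-- Formulas built from atoms using only `∧`, `∨` and restricted universal quantification
(no existential quantifier). -/
def NoEx : KrF Λ → Prop
  | atom _ _ => True
  | and a b => NoEx a ∧ NoEx b
  | or a b => NoEx a ∧ NoEx b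
  | all _ _ _ β => NoEx β
  | ex _ _ _ _ => False

/-- `GKok U e φ`: every variable occurring in an `L`-expression of an atom of `φ` is
inherently universal. Here `U` is the set of variables that are inherently universal so far
(initially the free variables) and `e` records whether we are within the scope of an
existential quantifier. -/
def GKok : Set ℕ → Bool → KrF Λ → Prop
  | U, _, atom _ E => E.evars ⊆ U
  | U, e, and a b => GKok U e a ∧ GKok U e b
  | U, e, or a b => GKok U e a ∧ GKok U e b
  | U, false, all y _ _ β => GKok (insert y U) false β
  | U, true, all _ _ _ β => GKok U true β
  | U, _, ex _ _ _ β => GKok U true β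

end KrF

/-- A generalized Kracht formula with free variables: clean, restrictedly positive with safe
atoms, and in every atom `y ∈ E` all variables of `E` are inherently universal. -/
def IsGenKrachtFV {Λ : Type u} (α : KrF Λ) : Prop :=
  α.Clean ∧ α.AtomsAll Safe ∧ α.GKok α.fv false

/-- A generalized Kracht formula: a generalized Kracht formula with free variables whose
only free variable is `x0`. -/
def IsGenKracht {Λ : Type u} (α : KrF Λ) (x0 : ℕ) : Prop :=
  IsGenKrachtFV α ∧ α.fv = {x0}

/-- Generalized Sahlqvist antecedents: built from regular box-formulas and negative
formulas using only `∧`, `∨`, `◇_λ`. -/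
inductive GSAnt {Λ : Type u} : MF Λ (ℕ × ℕ) → Prop
  | reg {φ p} : RegBF Prod.fst φ p → GSAnt φ
  | neg {φ} : Positive φ → GSAnt (.neg φ)
  | and {a b} : GSAnt a → GSAnt b → GSAnt (.and a b)
  | or {a b} : GSAnt a → GSAnt b → GSAnt (.or a b)
  | dia (l) {a} : GSAnt a → GSAnt (.dia l a)

/-- Generalized Sahlqvist formulas: built from generalized Sahlqvist implications
`GSA → ⊥` by applying boxes and conjunctions, and disjunctions only to formulas without
common propositional variables. -/
inductive GSF {Λ : Type u} : MF Λ (ℕ × ℕ) → Prop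
  | impl {a} : GSAnt a → GSF (.imp a .bot)
  | box (l) {a} : GSF a → GSF (.box l a)
  | and {a b} : GSF a → GSF b → GSF (.and a b)
  | or {a b} : GSF a → GSF b → MF.vars a ∩ MF.vars b = ∅ → GSF (.or a b)

open Classical in
/-- The modal translation `E^T` of a quasi-safe expression: safe subexpressions are
replaced by their associated propositional variables `p_E`, and `∩, ∪, R^{-1}_λ, R^□_λ`
become `∧, ∨, ◇_λ, □_λ`. -/
noncomputable def Etrans {Λ : Type u} (pE : LExp Λ → ℕ × ℕ) : LExp Λ → MF Λ (ℕ × ℕ)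
  | .var i => .var (pE (.var i))
  | .top => .top
  | .bot => .bot
  | .inter a b =>
      if Safe (LExp.inter a b) then .var (pE (.inter a b))
      else .and (Etrans pE a) (Etrans pE b)
  | .union a b =>
      if Safe (LExp.union a b) then .var (pE (.union a b))
      else .or (Etrans pE a) (Etrans pE b)
  | .rinv l a =>
      if Safe (LExp.rinv l a) then .var (pE (.rinv l a)) else .dia l (Etrans pE a)
  | .rbox l a =>
      if Safe (LExp.rbox l a) then .var (pE (.rbox l a)) else .box l (Etrans pE a)
  | .rfw l a => if Safe (LExp.rfw l a) then .var (pE (.rfw l a)) else .bot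

/-- A finite disjunction of modal formulas (empty disjunction is `⊥`). -/
def orList {Λ : Type u} {V : Type v} : List (MF Λ V) → MF Λ V
  | [] => .bot
  | a :: as => .or a (orList as)


/-!
Boxes, conjunctions and variable-disjoint disjunctions of generalized Sahlqvist formulas are
translated literally, the last because valuations refuting the two disjuncts glue to one refuting
both. For a generalized Sahlqvist implication `GSA → ⊥`, distribute `∧` and `◇` over `∨`: each
disjunct of `GSA` is a tree, built by `∧` and `◇` from regular box-formulas and negative formulas.
Quantify universally over its nodes along its edges. The box-formulas hold at their nodes under
a valuation iff it contains the minimal valuation `thetaMinSem`, and the negative formulas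
are antitone in the valuation, so the tree is refuted by every valuation iff the minimal one
falsifies one of its negative formulas. That valuation is denoted by the safe expressions
`KFsyn`, and a positive formula evaluated on them unravels into a restrictedly positive formula
whose atoms only mention nodes, i.e. inherently universal variables. Bound variables are taken
from a counter, which keeps the formula clean.
-/

section Semantics
variable {Λ : Type u} {V : Type v} {F : Frame Λ}

theorem sat_congr {θ θ' : V → Set F.W} (φ : MF Λ V) (h : ∀ q ∈ φ.vars, θ q = θ' q)
    (x : F.W) : sat F θ x φ ↔ sat F θ' x φ := by
  induction φ generalizing x with
  | var p => simp [sat, h p (by simp [MF.vars])]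
  | top | bot => rfl
  | and a b iha ihb | or a b iha ihb | imp a b iha ihb =>
    simp only [sat, iha (fun q hq => h q (Or.inl hq)), ihb (fun q hq => h q (Or.inr hq))]
  | neg a iha => simp only [sat, iha h]
  | dia l a iha | box l a iha => simp only [sat, iha h]

theorem KPsem_mono {P P' : ℕ × ℕ → Set F.W} (h : ∀ q, P q ⊆ P' q) (φ : MF Λ (ℕ × ℕ)) :
    KPsem F P φ ⊆ KPsem F P' φ := by
  induction φ with
  | var q => exact h q
  | top | bot | neg | imp => exact subset_rfl
  | and a b iha ihb => exact Set.inter_subset_inter iha ihb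
  | or a b iha ihb => exact Set.union_subset_union iha ihb
  | dia l a iha => exact fun x ⟨v, hv, hm⟩ => ⟨v, hv, iha hm⟩
  | box l a iha => exact fun x hx v hv => iha (hx v hv)

theorem KPsem_congr {P P' : ℕ × ℕ → Set F.W} (φ : MF Λ (ℕ × ℕ))
    (h : ∀ q ∈ φ.vars, P q = P' q) : KPsem F P φ = KPsem F P' φ := by
  induction φ with
  | var q => exact h q (by simp [MF.vars])
  | top | bot | neg | imp => rfl
  | and a b iha ihb | or a b iha ihb =>
    simp only [KPsem, iha (fun q hq => h q (Or.inl hq)), ihb (fun q hq => h q (Or.inr hq))]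
  | dia l a iha | box l a iha => simp only [KPsem, iha h]

theorem Positive.sat_iff {θ : ℕ × ℕ → Set F.W} {φ : MF Λ (ℕ × ℕ)} (hφ : Positive φ)
    (x : F.W) : sat F θ x φ ↔ x ∈ KPsem F θ φ := by
  induction hφ generalizing x with
  | var | top | bot => simp [sat, KPsem]
  | and _ _ iha ihb => simp only [sat, KPsem, Set.mem_inter_iff, iha, ihb]
  | or _ _ iha ihb => simp only [sat, KPsem, Set.mem_union, iha, ihb]
  | dia l _ iha => simp only [sat, KPsem, Rinv, Set.mem_ofPred_eq, iha]
  | box l _ iha => simp only [sat, KPsem, RboxOp, Set.mem_ofPred_eq, iha]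

theorem Positive.sat_mono {θ θ' : ℕ × ℕ → Set F.W} {φ : MF Λ (ℕ × ℕ)} (hφ : Positive φ)
    (h : ∀ q, θ q ⊆ θ' q) {x : F.W} (hx : sat F θ x φ) : sat F θ' x φ := by
  rw [hφ.sat_iff] at hx ⊢
  exact KPsem_mono h φ hx

theorem KVsem_mono {P P' : ℕ × ℕ → Set F.W} (h : ∀ q, P q ⊆ P' q) (φ : MF Λ (ℕ × ℕ))
    {X X' : Set F.W} (hX : X ⊆ X') : KVsem F P φ X ⊆ KVsem F P' φ X' := by
  induction φ generalizing X X' with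
  | var => exact hX
  | imp a b _ ihb => exact ihb (Set.inter_subset_inter hX (KPsem_mono h a))
  | box l a iha => exact iha fun x ⟨v, hv, hm⟩ => ⟨v, hv, hX hm⟩
  | top | bot | and | or | neg | dia => exact subset_rfl

theorem RegBF.KVsem_congr {r : ℕ × ℕ → ℕ} {φ : MF Λ (ℕ × ℕ)} {p : ℕ × ℕ}
    (hφ : RegBF r φ p) {P P' : ℕ × ℕ → Set F.W} (h : ∀ q, r q < r p → P q = P' q)
    (X : Set F.W) : KVsem F P φ X = KVsem F P' φ X := by
  induction hφ generalizing X with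
  | var => rfl
  | @imp POS _ _ _ hlt _ ih => simp only [KVsem, KPsem_congr POS (fun q hq => h q (hlt q hq)), ih h]
  | box l _ ih => simp only [KVsem, ih h]

theorem RegBF.forall_sat_iff {r : ℕ × ℕ → ℕ} {φ : MF Λ (ℕ × ℕ)} {p : ℕ × ℕ}
    (hφ : RegBF r φ p) (θ : ℕ × ℕ → Set F.W) (X : Set F.W) :
    (∀ y ∈ X, sat F θ y φ) ↔ KVsem F θ φ X ⊆ θ p := by
  induction hφ generalizing X with
  | var => rfl
  | imp hPOS _ _ ih =>
    rw [KVsem, ← ih]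
    simp only [sat, Set.mem_inter_iff, hPOS.sat_iff, and_imp]
  | box l _ ih =>
    rw [KVsem, ← ih]
    simp only [sat, Rfwd, Set.mem_ofPred_eq]
    grind

end Semantics

section MinimalValuation
variable {Λ : Type u} {F : Frame Λ} {ι : Type w} (g : ι → F.W) (f : ι → Set (MF Λ (ℕ × ℕ)))

noncomputable def thetaMin : ℕ × ℕ → Set F.W := fun q => thetaMinSem F g f q.1 q.2

theorem thetaMinSem_eq (k i : ℕ) :
    thetaMinSem F g f k i = ⋃ j, ⋃ φ ∈ f j, ⋃ _ : RegBF Prod.fst φ (k, i),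
      KVsem F (fun q => if q.1 < k then thetaMin g f q else ∅) φ {g j} := by
  rw [thetaMinSem, Nat.strongRecOn_eq]
  simp only [dite_eq_ite, thetaMin]
  rfl

variable {g f}

theorem sat_thetaMin {j : ι} {φ : MF Λ (ℕ × ℕ)} (hφ : φ ∈ f j) {p : ℕ × ℕ}
    (hreg : RegBF Prod.fst φ p) : sat F (thetaMin g f) (g j) φ := by
  refine (hreg.forall_sat_iff _ {g j}).mpr ?_ (g j) rfl
  rw [hreg.KVsem_congr (P' := fun q => if q.1 < p.1 then thetaMin g f q else ∅)
    (fun q hq => (if_pos hq).symm)]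
  intro x hx
  show x ∈ thetaMinSem F g f p.1 p.2
  rw [thetaMinSem_eq]
  exact Set.mem_iUnion.mpr ⟨j, Set.mem_iUnion₂.mpr ⟨φ, hφ, Set.mem_iUnion.mpr ⟨hreg, hx⟩⟩⟩

theorem thetaMin_le {θ : ℕ × ℕ → Set F.W}
    (hθ : ∀ j, ∀ φ ∈ f j, (∃ p, RegBF Prod.fst φ p) → sat F θ (g j) φ) (q : ℕ × ℕ) :
    thetaMin g f q ⊆ θ q := by
  obtain ⟨k, i⟩ := q
  induction k using Nat.strong_induction_on generalizing i with
  | _ k ih =>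
  intro x hx
  change x ∈ thetaMinSem F g f k i at hx
  simp only [thetaMinSem_eq, Set.mem_iUnion] at hx
  obtain ⟨j, φ, hφ, hreg, hx⟩ := hx
  have hlow : ∀ q, (if q.1 < k then thetaMin g f q else ∅) ⊆ θ q := fun q => by
    split_ifs with hq
    · exact ih q.1 hq q.2
    · exact Set.empty_subset _
  exact (hreg.forall_sat_iff θ {g j}).mp (fun y hy => hy ▸ hθ j φ hφ ⟨_, hreg⟩)
    (KVsem_mono hlow φ subset_rfl hx)

end MinimalValuation

section SatisfiableLists
variable {Λ : Type u}

def boxOrNeg : Set (MF Λ (ℕ × ℕ)) :=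
  {φ | (∃ p, RegBF Prod.fst φ p) ∨ ∃ P, Positive P ∧ φ = .neg P}

open Classical in
noncomputable def attachedAt (L : List (ℕ × MF Λ (ℕ × ℕ))) (y : ℕ) : Finset (MF Λ (ℕ × ℕ)) :=
  ((L.filter (·.1 = y)).map Prod.snd).toFinset

@[simp] theorem mem_attachedAt {L : List (ℕ × MF Λ (ℕ × ℕ))} {y : ℕ} {φ : MF Λ (ℕ × ℕ)} :
    φ ∈ attachedAt L y ↔ (y, φ) ∈ L := by
  simp [attachedAt]

theorem exists_sat_iff_thetaMin {F : Frame Λ} (g : ℕ → F.W) {L : List (ℕ × MF Λ (ℕ × ℕ))}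
    (hL : ∀ p ∈ L, p.2 ∈ boxOrNeg) :
    (∃ θ, ∀ p ∈ L, sat F θ (g p.1) p.2) ↔
      ∀ y P, (y, .neg P) ∈ L → ¬ sat F (thetaMin g fun y => ↑(attachedAt L y)) (g y) P := by
  constructor
  · rintro ⟨θ, hθ⟩ y P hyP hmin
    have hpos : Positive P := by
      rcases hL _ hyP with ⟨p, hp⟩ | ⟨P', hP', hP⟩
      · cases hp
      · exact (MF.neg.inj hP).symm ▸ hP'
    have hle := thetaMin_le (g := g) (f := fun y => ↑(attachedAt L y)) (θ := θ)
      (fun j φ hφ _ => hθ (j, φ) (mem_attachedAt.mp hφ))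
    exact hθ _ hyP (hpos.sat_mono hle hmin)
  · intro h
    refine ⟨thetaMin g fun y => ↑(attachedAt L y), fun ⟨y, φ⟩ hp => ?_⟩
    rcases hL _ hp with ⟨p, hreg⟩ | ⟨P, -, rfl⟩
    · exact sat_thetaMin (mem_attachedAt.mpr hp) hreg
    · exact h y P hp

end SatisfiableLists

section SyntacticMinimalValuation
variable {Λ : Type u}

theorem den_unionList (F : Frame Λ) (g : ℕ → F.W) (L : List (LExp Λ)) :
    (unionList L).den F g = ⋃ S ∈ L, S.den F g := by
  induction L with
  | nil => simp [unionList, LExp.den]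
  | cons a as ih => simp [unionList, LExp.den, ih]

theorem den_KPsub (F : Frame Λ) (g : ℕ → F.W) (KF : ℕ × ℕ → LExp Λ) (ψ : MF Λ (ℕ × ℕ)) :
    (KPsub KF ψ).den F g = KPsem F (fun q => (KF q).den F g) ψ := by
  induction ψ with
  | var | top | bot | neg | imp => rfl
  | and a b iha ihb | or a b iha ihb => simp only [KPsub, KPsem, LExp.den, iha, ihb]
  | dia l a iha | box l a iha => simp only [KPsub, KPsem, LExp.den, iha]

theorem den_KVFsyn (F : Frame Λ) (g : ℕ → F.W) (KF : ℕ × ℕ → LExp Λ) (ψ : MF Λ (ℕ × ℕ))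
    (t : LExp Λ) : (KVFsyn KF ψ t).den F g = KVsem F (fun q => (KF q).den F g) ψ (t.den F g) := by
  induction ψ generalizing t with
  | var | top | bot | and | or | neg | dia => rfl
  | imp a b _ ihb => rw [KVFsyn, KVsem, ihb, LExp.den, den_KPsub]
  | box l a iha => rw [KVFsyn, KVsem, iha, LExp.den]

variable (n : ℕ) (f : ℕ → Finset (MF Λ (ℕ × ℕ)))

open scoped Classical in
noncomputable def KFcomps (k i : ℕ) : List (LExp Λ) :=
  (List.range n).flatMap fun j =>
    ((f j).toList.filter fun φ => decide (RegBF Prod.fst φ (k, i))).map fun φ => KVFat n f φ j k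

theorem KFsyn_eq (k i : ℕ) : KFsyn n f k i = unionList (KFcomps n f k i) := by
  rw [KFsyn, Nat.strongRecOn_eq]
  rfl

variable {n f}

theorem den_KVFat (F : Frame Λ) (g : ℕ → F.W) (φ : MF Λ (ℕ × ℕ)) (j k : ℕ) :
    (KVFat n f φ j k).den F g = KVsem F (fun q => (lowKF n f k q).den F g) φ {g j} :=
  den_KVFsyn F g _ φ _

theorem den_KFsyn (F : Frame Λ) (g : ℕ → F.W) (hf : ∀ j, n ≤ j → f j = ∅) (k i : ℕ) :
    (KFsyn n f k i).den F g = thetaMinSem F g (fun j => ↑(f j)) k i := by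
  induction k using Nat.strong_induction_on generalizing i with
  | _ k ih =>
  have hlow : (fun q => (lowKF n f k q).den F g) =
      fun q => if q.1 < k then thetaMin g (fun j => ↑(f j)) q else ∅ := by
    funext q
    unfold lowKF
    split_ifs with hq
    · exact ih q.1 hq q.2
    · rfl
  rw [KFsyn_eq, thetaMinSem_eq, den_unionList]
  ext x
  simp only [KFcomps, Set.mem_iUnion, List.mem_flatMap, List.mem_map, List.mem_filter,
    List.mem_range, Finset.mem_toList, decide_eq_true_eq, Finset.mem_coe, exists_prop]
  constructor
  · rintro ⟨_, ⟨j, -, φ, ⟨hφ, hreg⟩, rfl⟩, hx⟩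
    rw [den_KVFat, hlow] at hx
    exact ⟨j, φ, hφ, hreg, hx⟩
  · rintro ⟨j, φ, hφ, hreg, hx⟩
    have hj : j < n := by
      by_contra hj
      simp [hf j (not_lt.mp hj)] at hφ
    exact ⟨_, ⟨j, hj, φ, ⟨hφ, hreg⟩, rfl⟩, by rwa [den_KVFat, hlow]⟩

end SyntacticMinimalValuation

section Safety
variable {Λ : Type u}

-- `Safe e` unfolds to `SafeFor e ∧ RfwSafe e`.
def RfwSafe (e : LExp Λ) : Prop := ∀ l a, Subexp (.rfw l a) e → SafeFor a

namespace RfwSafe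

theorem var (i : ℕ) : RfwSafe (.var i : LExp Λ) := fun _ _ h => by cases h

theorem top : RfwSafe (.top : LExp Λ) := fun _ _ h => by cases h

theorem bot : RfwSafe (.bot : LExp Λ) := fun _ _ h => by cases h

theorem inter {a b : LExp Λ} (ha : RfwSafe a) (hb : RfwSafe b) : RfwSafe (.inter a b) :=
  fun l c h => by cases h with
    | interL h => exact ha l c h
    | interR h => exact hb l c h

theorem union {a b : LExp Λ} (ha : RfwSafe a) (hb : RfwSafe b) : RfwSafe (.union a b) :=
  fun l c h => by cases h with
    | unionL h => exact ha l c h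
    | unionR h => exact hb l c h

theorem rinv {l : Λ} {a : LExp Λ} (ha : RfwSafe a) : RfwSafe (.rinv l a) :=
  fun l' c h => by cases h with | rinv _ h => exact ha l' c h

theorem rbox {l : Λ} {a : LExp Λ} (ha : RfwSafe a) : RfwSafe (.rbox l a) :=
  fun l' c h => by cases h with | rbox _ h => exact ha l' c h

theorem rfw {l : Λ} {a : LExp Λ} (hsf : SafeFor a) (ha : RfwSafe a) : RfwSafe (.rfw l a) :=
  fun l' c h => by cases h with
    | refl => exact hsf
    | rfw _ h => exact ha l' c h

theorem unionList {L : List (LExp Λ)} (h : ∀ S ∈ L, RfwSafe S) : RfwSafe (unionList L) := by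
  induction L with
  | nil => exact bot
  | cons a as ih => exact union (h a List.mem_cons_self) (ih fun S hS => h S (.tail _ hS))

theorem KPsub {KF : ℕ × ℕ → LExp Λ} (hKF : ∀ q, RfwSafe (KF q)) (ψ : MF Λ (ℕ × ℕ)) :
    RfwSafe (KPsub KF ψ) := by
  induction ψ with
  | var q => exact hKF q
  | top => exact top
  | bot | neg | imp => exact bot
  | and _ _ iha ihb => exact inter iha ihb
  | or _ _ iha ihb => exact union iha ihb
  | dia _ _ iha => exact rinv iha
  | box _ _ iha => exact rbox iha

end RfwSafe

theorem RegBF.safe_KVFsyn {KF : ℕ × ℕ → LExp Λ} (hKF : ∀ q, RfwSafe (KF q))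
    {r : ℕ × ℕ → ℕ} {ψ : MF Λ (ℕ × ℕ)} {p : ℕ × ℕ} (hψ : RegBF r ψ p) {t : LExp Λ}
    (ht : SafeFor t) (ht' : RfwSafe t) : Safe (KVFsyn KF ψ t) := by
  induction hψ generalizing t with
  | var => exact ⟨ht, ht'⟩
  | imp _ _ _ ih => exact ih (.interL ht) (ht'.inter (.KPsub hKF _))
  | box l _ ih => exact ih (.rfw l ht) (.rfw ht ht')

theorem safe_of_mem_KFcomps {n : ℕ} {f : ℕ → Finset (MF Λ (ℕ × ℕ))} {k i : ℕ} {S : LExp Λ}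
    (hS : S ∈ KFcomps n f k i) : Safe S := by
  induction k using Nat.strong_induction_on generalizing i S with
  | _ k ih =>
  classical
  simp only [KFcomps, List.mem_flatMap, List.mem_map, List.mem_filter,
    decide_eq_true_eq] at hS
  obtain ⟨j, -, φ, ⟨-, hreg⟩, rfl⟩ := hS
  refine hreg.safe_KVFsyn (fun q => ?_) (.var j) (.var j)
  unfold lowKF
  split_ifs with hq
  · rw [KFsyn_eq]
    exact .unionList fun S hS => (ih q.1 hq hS).2
  · exact .bot

end Safety

section Evars
variable {Λ : Type u}

theorem evars_unionList (L : List (LExp Λ)) : (unionList L).evars = ⋃ S ∈ L, S.evars := by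
  induction L with
  | nil => simp [unionList, LExp.evars]
  | cons a as ih => simp [unionList, LExp.evars, ih]

theorem evars_KPsub (KF : ℕ × ℕ → LExp Λ) (ψ : MF Λ (ℕ × ℕ)) :
    (KPsub KF ψ).evars ⊆ ⋃ q, (KF q).evars := by
  induction ψ with
  | var q => exact Set.subset_iUnion (fun q => (KF q).evars) q
  | top | bot | neg | imp => exact Set.empty_subset _
  | and _ _ iha ihb | or _ _ iha ihb => exact Set.union_subset iha ihb
  | dia _ _ iha | box _ _ iha => exact iha

theorem evars_KVFsyn (KF : ℕ × ℕ → LExp Λ) (ψ : MF Λ (ℕ × ℕ)) (t : LExp Λ) :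
    (KVFsyn KF ψ t).evars ⊆ t.evars ∪ ⋃ q, (KF q).evars := by
  induction ψ generalizing t with
  | var => exact Set.subset_union_left
  | imp a _ _ ihb =>
    refine (ihb _).trans (Set.union_subset ?_ Set.subset_union_right)
    exact Set.union_subset_union_right _ (evars_KPsub KF a)
  | box _ _ iha => exact iha _
  | top | bot | and | or | neg | dia => exact Set.empty_subset _

theorem evars_subset_of_mem_KFcomps {n : ℕ} {f : ℕ → Finset (MF Λ (ℕ × ℕ))} {k i : ℕ}
    {S : LExp Λ} (hS : S ∈ KFcomps n f k i) : S.evars ⊆ {j | (f j).Nonempty} := by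
  induction k using Nat.strong_induction_on generalizing i S with
  | _ k ih =>
  classical
  simp only [KFcomps, List.mem_flatMap, List.mem_map, List.mem_filter] at hS
  obtain ⟨j, -, φ, ⟨hφ, -⟩, rfl⟩ := hS
  refine (evars_KVFsyn _ φ _).trans (Set.union_subset ?_ (Set.iUnion_subset fun q => ?_))
  · simpa [LExp.evars] using ⟨φ, Finset.mem_toList.mp hφ⟩
  · unfold lowKF
    split_ifs with hq
    · rw [KFsyn_eq, evars_unionList]
      exact Set.iUnion₂_subset fun S hS => ih q.1 hq hS
    · exact Set.empty_subset _

end Evars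

namespace KrF
variable {Λ : Type u}

-- `KrF` has no constants: truth and falsity are atoms about a variable `u`, which is always
-- chosen inherently universal.
def verum (u : ℕ) : KrF Λ := atom u (.var u)

def falsum (u : ℕ) : KrF Λ := atom u (.inter (.var u) .bot)

def memAny (u y : ℕ) : List (LExp Λ) → KrF Λ
  | [] => falsum u
  | S :: Ss => or (atom y S) (memAny u y Ss)

def bvBound : KrF Λ → ℕ
  | atom _ _ => 0
  | and a b | or a b => max a.bvBound b.bvBound
  | all y _ _ β | ex y _ _ β => max (y + 1) β.bvBound

-- A formula placed next to `α` takes its bound variables from `α.freshAfter m` on, so that the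
-- two bind disjoint sets of variables.
def freshAfter (α : KrF Λ) (m : ℕ) : ℕ := max m α.bvBound

theorem le_freshAfter (α : KrF Λ) (m : ℕ) : m ≤ α.freshAfter m := le_max_left _ _

theorem lt_freshAfter {α : KrF Λ} {z : ℕ} (hz : z ∈ α.bv) (m : ℕ) : z < α.freshAfter m := by
  refine lt_of_lt_of_le ?_ (le_max_right m _)
  induction α with
  | atom => exact absurd hz id
  | and a b iha ihb | or a b iha ihb =>
    rcases hz with hz | hz
    · exact lt_max_of_lt_left (iha hz)
    · exact lt_max_of_lt_right (ihb hz)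
  | all y _ _ β ih | ex y _ _ β ih =>
    rcases hz with rfl | hz
    · exact lt_max_of_lt_left (Nat.lt_succ_self _)
    · exact lt_max_of_lt_right (ih hz)

section Semantics
variable (F : Frame Λ) (g : ℕ → F.W)

@[simp] theorem holds_verum (u : ℕ) : (verum u : KrF Λ).holds F g := rfl

@[simp] theorem not_holds_falsum (u : ℕ) : ¬ (falsum u : KrF Λ).holds F g := by
  simp [falsum, holds, LExp.den]

theorem holds_memAny (u y : ℕ) (Ss : List (LExp Λ)) :
    (memAny u y Ss).holds F g ↔ g y ∈ ⋃ S ∈ Ss, S.den F g := by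
  induction Ss with
  | nil => simp [memAny]
  | cons S Ss ih => simp [memAny, holds, ih]

end Semantics

def FreshFrom (α : KrF Λ) (m : ℕ) : Prop := α.CleanBound ∧ ∀ z ∈ α.bv, m ≤ z

namespace FreshFrom

theorem atom (y : ℕ) (E : LExp Λ) (m : ℕ) : FreshFrom (atom y E) m := ⟨trivial, fun _ h => h.elim⟩

theorem verum (u m : ℕ) : FreshFrom (verum u : KrF Λ) m := atom _ _ m

theorem falsum (u m : ℕ) : FreshFrom (falsum u : KrF Λ) m := atom _ _ m

theorem mono {α : KrF Λ} {m m' : ℕ} (h : FreshFrom α m) (hm : m' ≤ m) : FreshFrom α m' :=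
  ⟨h.1, fun z hz => hm.trans (h.2 z hz)⟩

theorem and {a b : KrF Λ} {m : ℕ} (ha : FreshFrom a m) (hb : FreshFrom b (a.freshAfter m)) :
    FreshFrom (.and a b) m := by
  refine ⟨⟨ha.1, hb.1, Set.eq_empty_of_forall_notMem fun z ⟨hza, hzb⟩ => ?_⟩, fun z hz => ?_⟩
  · exact absurd (hb.2 z hzb) (not_le.mpr (lt_freshAfter hza m))
  · rcases hz with hz | hz
    · exact ha.2 z hz
    · exact (le_freshAfter a m).trans (hb.2 z hz)

theorem or {a b : KrF Λ} {m : ℕ} (ha : FreshFrom a m) (hb : FreshFrom b (a.freshAfter m)) :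
    FreshFrom (.or a b) m :=
  and ha hb

theorem all {β : KrF Λ} {m : ℕ} (l : Λ) (x : ℕ) (h : FreshFrom β (m + 1)) :
    FreshFrom (.all m l x β) m := by
  refine ⟨⟨h.1, fun hm => absurd (h.2 m hm) (by omega)⟩, fun z hz => ?_⟩
  rcases hz with rfl | hz
  · exact le_rfl
  · exact (h.2 z hz).trans' (Nat.le_succ m)

theorem ex {β : KrF Λ} {m : ℕ} (l : Λ) (x : ℕ) (h : FreshFrom β (m + 1)) :
    FreshFrom (.ex m l x β) m :=
  all l x h

theorem memAny (u y m : ℕ) (Ss : List (LExp Λ)) : FreshFrom (memAny u y Ss) m := by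
  induction Ss generalizing m with
  | nil => exact falsum u m
  | cons S Ss ih => exact or (atom y S m) (ih _)

end FreshFrom

theorem AtomsAll.mono {P Q : LExp Λ → Prop} (hPQ : ∀ E, P E → Q E) {α : KrF Λ}
    (h : α.AtomsAll P) : α.AtomsAll Q := by
  induction α with
  | atom _ E => exact hPQ E h
  | and _ _ iha ihb | or _ _ iha ihb => exact ⟨iha h.1, ihb h.2⟩
  | all _ _ _ _ ih | ex _ _ _ _ ih => exact ih h

theorem GKok.mono {U U' : Set ℕ} (hU : U ⊆ U') {e : Bool} {α : KrF Λ} (h : α.GKok U e) :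
    α.GKok U' e := by
  induction α generalizing U U' e with
  | atom => cases e <;> exact h.trans hU
  | and _ _ iha ihb | or _ _ iha ihb => cases e <;> exact ⟨iha hU h.1, ihb hU h.2⟩
  | all y _ _ _ ih =>
    cases e
    · exact ih (Set.insert_subset_insert hU) h
    · exact ih hU h
  | ex _ _ _ _ ih => cases e <;> exact ih hU h

theorem gkok_of_atomsAll {U : Set ℕ} {α : KrF Λ} (h : α.AtomsAll fun E => E.evars ⊆ U)
    (e : Bool) : α.GKok U e := by
  induction α generalizing e with
  | atom => cases e <;> exact h
  | and _ _ iha ihb | or _ _ iha ihb => cases e <;> exact ⟨iha h.1 _, ihb h.2 _⟩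
  | all y _ _ _ ih =>
    cases e
    · exact (ih h false).mono (Set.subset_insert y U)
    · exact ih h true
  | ex _ _ _ _ ih => cases e <;> exact ih h true

end KrF

theorem LExp.den_congr {Λ : Type u} (F : Frame Λ) {g g' : ℕ → F.W} (E : LExp Λ)
    (h : ∀ i ∈ E.evars, g i = g' i) : E.den F g = E.den F g' := by
  induction E with
  | var i => simp [LExp.den, h i (by simp [LExp.evars])]
  | top | bot => rfl
  | inter a b iha ihb | union a b iha ihb =>
    simp only [LExp.den, iha fun i hi => h i (Or.inl hi), ihb fun i hi => h i (Or.inr hi)]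
  | rinv l a iha | rbox l a iha | rfw l a iha => simp only [LExp.den, iha h]

def SafeIn {Λ : Type u} (W : Set ℕ) (E : LExp Λ) : Prop := Safe E ∧ E.evars ⊆ W

namespace KrF
variable {Λ : Type u} {W : Set ℕ} {u : ℕ}

theorem fv_verum_subset (hu : u ∈ W) (y : ℕ) : (verum u : KrF Λ).fv ⊆ insert y W := by
  simpa [verum, fv, LExp.evars] using Or.inr hu

theorem fv_falsum_subset (hu : u ∈ W) (y : ℕ) : (falsum u : KrF Λ).fv ⊆ insert y W := by
  simpa [falsum, fv, LExp.evars] using Or.inr hu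

theorem atomsAll_verum (hu : u ∈ W) : (verum u : KrF Λ).AtomsAll (SafeIn W) :=
  ⟨⟨.var u, RfwSafe.var u⟩, by simpa [LExp.evars] using hu⟩

theorem atomsAll_falsum (hu : u ∈ W) : (falsum u : KrF Λ).AtomsAll (SafeIn W) :=
  ⟨⟨.interL (.var u), RfwSafe.inter (.var u) .bot⟩, by simpa [LExp.evars] using hu⟩

theorem fv_memAny (hu : u ∈ W) (y : ℕ) {Ss : List (LExp Λ)} (h : ∀ S ∈ Ss, S.evars ⊆ W) :
    (memAny u y Ss).fv ⊆ insert y W := by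
  induction Ss with
  | nil => exact fv_falsum_subset hu y
  | cons S Ss ih =>
    exact Set.union_subset (Set.insert_subset_insert (h S List.mem_cons_self))
      (ih fun S hS => h S (.tail _ hS))

theorem atomsAll_memAny (hu : u ∈ W) (y : ℕ) {Ss : List (LExp Λ)} (h : ∀ S ∈ Ss, SafeIn W S) :
    (memAny u y Ss).AtomsAll (SafeIn W) := by
  induction Ss with
  | nil => exact atomsAll_falsum hu
  | cons S Ss ih => exact ⟨h S List.mem_cons_self, ih fun S hS => h S (.tail _ hS)⟩

end KrF

section PositiveUnravelling
variable {Λ : Type u} (C : ℕ × ℕ → List (LExp Λ)) (u : ℕ)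

open KrF

def posToKr : MF Λ (ℕ × ℕ) → ℕ → ℕ → KrF Λ
  | .var q, y, _ => memAny u y (C q)
  | .top, _, _ => verum u
  | .and a b, y, m => .and (posToKr a y m) (posToKr b y ((posToKr a y m).freshAfter m))
  | .or a b, y, m => .or (posToKr a y m) (posToKr b y ((posToKr a y m).freshAfter m))
  | .dia l a, y, m => .ex m l y (posToKr a m (m + 1))
  | .box l a, y, m => .all m l y (posToKr a m (m + 1))
  | _, _, _ => falsum u

variable {C u}

theorem holds_posToKr (F : Frame Λ) {P : MF Λ (ℕ × ℕ)} (hP : Positive P) {m : ℕ}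
    (hC : ∀ q, ∀ S ∈ C q, ∀ z ∈ S.evars, z < m) (y : ℕ) (g : ℕ → F.W) :
    (posToKr C u P y m).holds F g ↔ g y ∈ KPsem F (fun q => ⋃ S ∈ C q, S.den F g) P := by
  induction hP generalizing y m g with
  | var q => exact holds_memAny F g u y (C q)
  | top => simp [posToKr, KPsem]
  | bot => simp [posToKr, KPsem]
  | @and a _ _ _ iha ihb =>
    have hC' q S hS z hz := (hC q S hS z hz).trans_le (le_freshAfter (posToKr C u a y m) m)
    simp only [posToKr, holds, iha hC, ihb hC', KPsem, Set.mem_inter_iff]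
  | @or a _ _ _ iha ihb =>
    have hC' q S hS z hz := (hC q S hS z hz).trans_le (le_freshAfter (posToKr C u a y m) m)
    simp only [posToKr, holds, iha hC, ihb hC', KPsem, Set.mem_union]
  | dia l _ ih | box l _ ih =>
    have hden (w : F.W) : (fun q => ⋃ S ∈ C q, S.den F (Function.update g m w)) =
        fun q => ⋃ S ∈ C q, S.den F g := by
      funext q
      refine Set.iUnion₂_congr fun S hS => S.den_congr F fun z hz => ?_
      exact Function.update_of_ne (hC q S hS z hz).ne _ _
    have hC' := fun q S hS z hz => (hC q S hS z hz).trans (Nat.lt_succ_self m)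
    simp only [posToKr, holds, ih hC', hden, Function.update_self, KPsem, Rinv, RboxOp,
      Set.mem_ofPred_eq]

theorem freshFrom_posToKr (P : MF Λ (ℕ × ℕ)) (y m : ℕ) : (posToKr C u P y m).FreshFrom m := by
  induction P generalizing y m with
  | var q => exact .memAny u y m _
  | top => exact .verum u m
  | bot | neg | imp => exact .falsum u m
  | and _ _ iha ihb => exact .and (iha y m) (ihb y _)
  | or _ _ iha ihb => exact .or (iha y m) (ihb y _)
  | dia l _ ih => exact .ex l y (ih m (m + 1))
  | box l _ ih => exact .all l y (ih m (m + 1))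

variable {W : Set ℕ}

theorem fv_posToKr (hu : u ∈ W) (hC : ∀ q, ∀ S ∈ C q, S.evars ⊆ W) (P : MF Λ (ℕ × ℕ)) (y m : ℕ) :
    (posToKr C u P y m).fv ⊆ insert y W := by
  induction P generalizing y m with
  | var q => exact fv_memAny hu y (hC q)
  | top => exact fv_verum_subset hu y
  | bot | neg | imp => exact fv_falsum_subset hu y
  | and _ _ iha ihb | or _ _ iha ihb => exact Set.union_subset (iha y m) (ihb y _)
  | dia _ _ ih | box _ _ ih =>
    exact Set.insert_subset_insert (Set.sdiff_subset_iff.mpr (ih m (m + 1)))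

theorem atomsAll_posToKr (hu : u ∈ W) (hC : ∀ q, ∀ S ∈ C q, SafeIn W S) (P : MF Λ (ℕ × ℕ))
    (y m : ℕ) : (posToKr C u P y m).AtomsAll (SafeIn W) := by
  induction P generalizing y m with
  | var q => exact atomsAll_memAny hu y (hC q)
  | top => exact atomsAll_verum hu
  | bot | neg | imp => exact atomsAll_falsum hu
  | and _ _ iha ihb | or _ _ iha ihb => exact ⟨iha y m, ihb y _⟩
  | dia _ _ ih | box _ _ ih => exact ih m (m + 1)

variable (C u) in
def posToKrAny : List (ℕ × MF Λ (ℕ × ℕ)) → ℕ → KrF Λ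
  | [], _ => falsum u
  | (y, P) :: L, m => .or (posToKr C u P y m) (posToKrAny L ((posToKr C u P y m).freshAfter m))

theorem holds_posToKrAny (F : Frame Λ) {L : List (ℕ × MF Λ (ℕ × ℕ))} (hL : ∀ p ∈ L, Positive p.2)
    {m : ℕ} (hC : ∀ q, ∀ S ∈ C q, ∀ z ∈ S.evars, z < m) (g : ℕ → F.W) :
    (posToKrAny C u L m).holds F g ↔
      ∃ p ∈ L, g p.1 ∈ KPsem F (fun q => ⋃ S ∈ C q, S.den F g) p.2 := by
  induction L generalizing m with
  | nil => simp [posToKrAny]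
  | cons p L ih =>
    obtain ⟨y, P⟩ := p
    have hC' q S hS z hz := (hC q S hS z hz).trans_le (le_freshAfter (posToKr C u P y m) m)
    simp only [posToKrAny, holds, holds_posToKr F (hL _ List.mem_cons_self) hC,
      ih (fun p hp => hL p (.tail _ hp)) hC', List.exists_mem_cons_iff]

theorem freshFrom_posToKrAny (L : List (ℕ × MF Λ (ℕ × ℕ))) (m : ℕ) :
    (posToKrAny C u L m).FreshFrom m := by
  induction L generalizing m with
  | nil => exact .falsum u m
  | cons p L ih => exact .or (freshFrom_posToKr _ _ m) (ih _)

theorem fv_posToKrAny (hu : u ∈ W) (hC : ∀ q, ∀ S ∈ C q, S.evars ⊆ W)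
    {L : List (ℕ × MF Λ (ℕ × ℕ))} (hL : ∀ p ∈ L, p.1 ∈ W) (m : ℕ) :
    (posToKrAny C u L m).fv ⊆ W := by
  induction L generalizing m with
  | nil => simpa [posToKrAny, falsum, fv, LExp.evars] using hu
  | cons p L ih =>
    refine Set.union_subset ?_ (ih (fun p hp => hL p (.tail _ hp)) _)
    exact (fv_posToKr hu hC _ _ m).trans (Set.insert_subset (hL p List.mem_cons_self) subset_rfl)

theorem atomsAll_posToKrAny (hu : u ∈ W) (hC : ∀ q, ∀ S ∈ C q, SafeIn W S)
    (L : List (ℕ × MF Λ (ℕ × ℕ))) (m : ℕ) : (posToKrAny C u L m).AtomsAll (SafeIn W) := by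
  induction L generalizing m with
  | nil => exact atomsAll_falsum hu
  | cons p L ih => exact ⟨atomsAll_posToKr hu hC _ _ m, ih _⟩

end PositiveUnravelling

section DisjunctiveNormalForm
variable {Λ : Type u} {V : Type v}

def dnf : MF Λ V → List (BuiltT Λ V)
  | .or a b => dnf a ++ dnf b
  | .and a b => (dnf a).flatMap fun s => (dnf b).map (.and s)
  | .dia l a => (dnf a).map (.dia l)
  | φ => [.base φ]

theorem sat_iff_exists_dnf (F : Frame Λ) (θ : V → Set F.W) (a : MF Λ V) (w : F.W) :
    sat F θ w a ↔ ∃ t ∈ dnf a, sat F θ w t.formula := by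
  induction a generalizing w with
  | var | top | bot | neg | imp | box => simp [dnf, BuiltT.formula]
  | and a b iha ihb =>
    simp only [sat, iha, ihb, dnf, List.mem_flatMap, List.mem_map]
    constructor
    · rintro ⟨⟨s, hs, hsa⟩, ⟨t, ht, htb⟩⟩
      exact ⟨.and s t, ⟨s, hs, t, ht, rfl⟩, hsa, htb⟩
    · rintro ⟨_, ⟨s, hs, t, ht, rfl⟩, hsa, htb⟩
      exact ⟨⟨s, hs, hsa⟩, ⟨t, ht, htb⟩⟩
  | or a b iha ihb => simp only [sat, iha, ihb, dnf, List.mem_append, or_and_right, exists_or]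
  | dia l a ih =>
    simp only [sat, ih, dnf, List.mem_map]
    constructor
    · rintro ⟨v, hv, t, ht, hvt⟩
      exact ⟨.dia l t, ⟨t, ht, rfl⟩, v, hv, hvt⟩
    · rintro ⟨_, ⟨t, ht, rfl⟩, v, hv, hvt⟩
      exact ⟨v, hv, t, ht, hvt⟩

theorem GSAnt.ok_dnf {a : MF Λ (ℕ × ℕ)} (ha : GSAnt a) : ∀ t ∈ dnf a, t.Ok boxOrNeg := by
  induction ha with
  | @reg φ _ hreg =>
    have hdnf : dnf φ = [.base φ] := by cases hreg <;> rfl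
    intro t ht
    rw [hdnf, List.mem_singleton] at ht
    exact ht ▸ Or.inl ⟨_, hreg⟩
  | @neg φ hpos =>
    intro t ht
    rw [show dnf φ.neg = [.base φ.neg] from rfl, List.mem_singleton] at ht
    exact ht ▸ Or.inr ⟨_, hpos, rfl⟩
  | and _ _ iha ihb =>
    simp only [dnf, List.mem_flatMap, List.mem_map]
    rintro _ ⟨s, hs, t, ht, rfl⟩
    exact ⟨iha s hs, ihb t ht⟩
  | or _ _ iha ihb =>
    intro t ht
    rcases List.mem_append.mp ht with h | h
    exacts [iha t h, ihb t h]
  | dia l _ ih =>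
    simp only [dnf, List.mem_map]
    rintro _ ⟨t, ht, rfl⟩
    exact ih t ht

end DisjunctiveNormalForm

namespace BuiltT
variable {Λ : Type u} {V : Type v}

def size : BuiltT Λ V → ℕ
  | base _ => 0
  | and a b => a.size + b.size
  | dia _ a => a.size + 1

/-- The base formulas of `t`, each paired with the variable naming its node: the root is named
`x`, the `◇`-nodes `m, m + 1, …, m + t.size - 1`. -/
def points : BuiltT Λ V → ℕ → ℕ → List (ℕ × MF Λ V)
  | base φ, x, _ => [(x, φ)]
  | and a b, x, m => a.points x m ++ b.points x (m + a.size)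
  | dia _ a, _, m => a.points m (m + 1)

def pre : BuiltT Λ V → ℕ → ℕ → KrF Λ → KrF Λ
  | base _, _, _, β => β
  | and a b, x, m, β => a.pre x m (b.pre x (m + a.size) β)
  | dia l a, x, m, β => .all m l x (a.pre m (m + 1) β)

def Reach (F : Frame Λ) : BuiltT Λ V → ℕ → ℕ → (ℕ → F.W) → (ℕ → F.W) → Prop
  | base _, _, _, g, g' => g' = g
  | and a b, x, m, g, g'' => ∃ g', a.Reach F x m g g' ∧ b.Reach F x (m + a.size) g' g''
  | dia l a, x, m, g, g' => ∃ w, F.R l (g x) w ∧ a.Reach F m (m + 1) (Function.update g m w) g'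

theorem holds_pre (F : Frame Λ) (t : BuiltT Λ V) (x m : ℕ) (β : KrF Λ) (g : ℕ → F.W) :
    (t.pre x m β).holds F g ↔ ∀ g', t.Reach F x m g g' → β.holds F g' := by
  induction t generalizing x m β g with
  | base => simp [pre, Reach]
  | and a b iha ihb => simp only [pre, Reach, iha, ihb]; grind
  | dia l a ih => simp only [pre, Reach, KrF.holds, ih]; grind

theorem Reach.eq_of_lt {F : Frame Λ} {t : BuiltT Λ V} {x m : ℕ} {g g' : ℕ → F.W}
    (h : t.Reach F x m g g') {z : ℕ} (hz : z < m) : g' z = g z := by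
  induction t generalizing x m g g' with
  | base => exact congrFun h z
  | and a b iha ihb =>
    obtain ⟨g₁, h₁, h₂⟩ := h
    rw [ihb h₂ (by omega), iha h₁ hz]
  | dia l a ih =>
    obtain ⟨w, -, h⟩ := h
    rw [ih h (by omega), Function.update_of_ne hz.ne]

theorem mem_points {t : BuiltT Λ V} {x m : ℕ} {p : ℕ × MF Λ V} (hp : p ∈ t.points x m) :
    p.1 = x ∨ m ≤ p.1 ∧ p.1 < m + t.size := by
  induction t generalizing x m with
  | base => simp_all [points]
  | and a b iha ihb =>
    rcases List.mem_append.mp hp with hp | hp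
    · have := iha hp; simp only [size]; omega
    · have := ihb hp; simp only [size]; omega
  | dia l a ih => have := ih hp; simp only [size]; omega

theorem Ok.mem_points {A : Set (MF Λ V)} {t : BuiltT Λ V} (ht : t.Ok A) {x m : ℕ}
    {p : ℕ × MF Λ V} (hp : p ∈ t.points x m) : p.2 ∈ A := by
  induction t generalizing x m with
  | base => simp_all [points, BuiltT.Ok]
  | and a b iha ihb =>
    rcases List.mem_append.mp hp with hp | hp
    exacts [iha ht.1 hp, ihb ht.2 hp]
  | dia l a ih => exact ih ht hp

theorem sat_formula_iff (F : Frame Λ) (θ : V → Set F.W) (t : BuiltT Λ V) {x m : ℕ}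
    (hx : x < m) (g : ℕ → F.W) :
    sat F θ (g x) t.formula ↔
      ∃ g', t.Reach F x m g g' ∧ ∀ p ∈ t.points x m, sat F θ (g' p.1) p.2 := by
  induction t generalizing x m g with
  | base φ => simp [formula, Reach, points]
  | and a b iha ihb =>
    have hb := fun g => ihb (x := x) (m := m + a.size) (by omega) g
    simp only [formula, sat, points, Reach, List.forall_mem_append]
    constructor
    · rintro ⟨hsa, hsb⟩
      obtain ⟨g₁, hr₁, hp₁⟩ := (iha hx g).mp hsa
      obtain ⟨g₂, hr₂, hp₂⟩ := (hb g₁).mp (by rwa [hr₁.eq_of_lt hx])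
      refine ⟨g₂, ⟨g₁, hr₁, hr₂⟩, fun p hp => ?_, hp₂⟩
      have := mem_points hp
      rw [hr₂.eq_of_lt (by omega)]
      exact hp₁ p hp
    · rintro ⟨g₂, ⟨g₁, hr₁, hr₂⟩, hp₁, hp₂⟩
      refine ⟨(iha hx g).mpr ⟨g₁, hr₁, fun p hp => ?_⟩, ?_⟩
      · have := mem_points hp
        rw [← hr₂.eq_of_lt (z := p.1) (by omega)]
        exact hp₁ p hp
      · rw [← hr₁.eq_of_lt hx]
        exact (hb g₁).mpr ⟨g₂, hr₂, hp₂⟩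
  | dia l a ih =>
    simp only [formula, sat, points, Reach]
    constructor
    · rintro ⟨w, hw, hsat⟩
      obtain ⟨g', hr, hp⟩ := (ih (Nat.lt_succ_self m) (Function.update g m w)).mp
        (by rwa [Function.update_self])
      exact ⟨g', ⟨w, hw, hr⟩, hp⟩
    · rintro ⟨g', ⟨w, hw, hr⟩, hp⟩
      have := (ih (Nat.lt_succ_self m) (Function.update g m w)).mpr ⟨g', hr, hp⟩
      exact ⟨w, hw, by rwa [Function.update_self] at this⟩

end BuiltT

namespace BuiltT
variable {Λ : Type u} {V : Type v}

theorem freshFrom_pre (t : BuiltT Λ V) (x : ℕ) {m : ℕ} {β : KrF Λ}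
    (hβ : β.FreshFrom (m + t.size)) : (t.pre x m β).FreshFrom m := by
  induction t generalizing x m β with
  | base => exact hβ.mono (Nat.le_add_right m 0)
  | and a b iha ihb =>
    exact iha x (ihb x (hβ.mono (by simp only [size]; omega)))
  | dia l a ih => exact .all l x (ih m (hβ.mono (by simp only [size]; omega)))

theorem fv_pre_subset (t : BuiltT Λ V) (x m : ℕ) (β : KrF Λ) :
    (t.pre x m β).fv ⊆ insert x (β.fv \ Set.Ico m (m + t.size)) := by
  induction t generalizing x m β with
  | base => simp [pre, size]
  | and a b iha ihb =>
    intro z hz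
    rcases iha x m _ hz with rfl | ⟨hz, hzI⟩
    · exact Or.inl rfl
    rcases ihb x _ β hz with rfl | ⟨hz, hzI'⟩
    · exact Or.inl rfl
    simp only [Set.mem_Ico] at hzI hzI'
    exact Or.inr ⟨hz, by simp only [Set.mem_Ico, size]; omega⟩
  | dia l a ih =>
    rintro z (rfl | ⟨hz, hzm⟩)
    · exact Or.inl rfl
    rcases ih m (m + 1) β hz with rfl | ⟨hz, hzI⟩
    · exact absurd rfl hzm
    simp only [Set.mem_Ico, Set.mem_singleton_iff] at hzI hzm
    exact Or.inr ⟨hz, by simp only [Set.mem_Ico, size]; omega⟩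

theorem gkok_pre (t : BuiltT Λ V) (x m : ℕ) {β : KrF Λ} {U : Set ℕ}
    (hβ : β.GKok (U ∪ Set.Ico m (m + t.size)) false) : (t.pre x m β).GKok U false := by
  induction t generalizing x m β U with
  | base => simpa [pre, size] using hβ
  | and a b iha ihb =>
    refine iha x m (ihb x _ (hβ.mono fun z hz => ?_))
    rcases hz with hz | ⟨hzm, hzn⟩
    · exact Or.inl (Or.inl hz)
    simp only [size] at hzn
    by_cases h : z < m + a.size
    · exact Or.inl (Or.inr ⟨hzm, h⟩)
    · exact Or.inr ⟨by omega, by omega⟩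
  | dia l a ih =>
    refine ih m (m + 1) (hβ.mono fun z hz => ?_)
    rcases hz with hz | ⟨hzm, hzn⟩
    · exact Or.inl (Or.inr hz)
    simp only [size] at hzn
    by_cases h : z = m
    · exact Or.inl (Or.inl h)
    · exact Or.inr ⟨by omega, by omega⟩

theorem atomsAll_pre (t : BuiltT Λ V) (x m : ℕ) {P : LExp Λ → Prop} {β : KrF Λ}
    (hβ : β.AtomsAll P) : (t.pre x m β).AtomsAll P := by
  induction t generalizing x m β with
  | base => exact hβ
  | and a b iha ihb => exact iha x m (ihb x _ hβ)
  | dia l a ih => exact ih m (m + 1) hβ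

end BuiltT

section MinimalCore
variable {Λ : Type u}

def negBodies (L : List (ℕ × MF Λ (ℕ × ℕ))) : List (ℕ × MF Λ (ℕ × ℕ)) :=
  L.filterMap fun p => match p.2 with
    | .neg P => some (p.1, P)
    | _ => none

theorem mem_negBodies {L : List (ℕ × MF Λ (ℕ × ℕ))} {y : ℕ} {P : MF Λ (ℕ × ℕ)} :
    (y, P) ∈ negBodies L ↔ (y, .neg P) ∈ L := by
  simp only [negBodies, List.mem_filterMap]
  constructor
  · rintro ⟨⟨y', φ⟩, hp, hφ⟩
    cases φ <;> simp_all
  · exact fun h => ⟨_, h, rfl⟩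

noncomputable def minCore (L : List (ℕ × MF Λ (ℕ × ℕ))) (u n : ℕ) : KrF Λ :=
  posToKrAny (fun q => KFcomps n (attachedAt L) q.1 q.2) u (negBodies L) n

theorem evars_subset_of_mem_KFcomps_attachedAt {L : List (ℕ × MF Λ (ℕ × ℕ))} {W : Set ℕ}
    (hW : ∀ p ∈ L, p.1 ∈ W) {n : ℕ} (q : ℕ × ℕ) {S : LExp Λ}
    (hS : S ∈ KFcomps n (attachedAt L) q.1 q.2) : S.evars ⊆ W := fun z hz => by
  obtain ⟨φ, hφ⟩ := evars_subset_of_mem_KFcomps hS hz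
  exact hW _ (mem_attachedAt.mp hφ)

theorem holds_minCore (F : Frame Λ) {L : List (ℕ × MF Λ (ℕ × ℕ))} (hL : ∀ p ∈ L, p.2 ∈ boxOrNeg)
    {n : ℕ} (hLn : ∀ p ∈ L, p.1 < n) (u : ℕ) (g : ℕ → F.W) :
    (minCore L u n).holds F g ↔ ¬ ∃ θ, ∀ p ∈ L, sat F θ (g p.1) p.2 := by
  have hpos {y P} (h : (y, P) ∈ negBodies L) : Positive P := by
    rcases hL _ (mem_negBodies.mp h) with ⟨_, hreg⟩ | ⟨_, hP, hPeq⟩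
    · cases hreg
    · exact (MF.neg.inj hPeq).symm ▸ hP
  have hf (j : ℕ) (hj : n ≤ j) : attachedAt L j = ∅ :=
    Finset.eq_empty_of_forall_notMem fun φ hφ => by
      have := hLn _ (mem_attachedAt.mp hφ)
      omega
  have hval : (fun q => ⋃ S ∈ KFcomps n (attachedAt L) q.1 q.2, S.den F g) =
      thetaMin g fun y => ↑(attachedAt L y) :=
    funext fun q => by rw [← den_unionList, ← KFsyn_eq, den_KFsyn F g hf]; rfl
  rw [minCore, holds_posToKrAny F (fun p hp => hpos hp)
    (fun q S hS z hz => evars_subset_of_mem_KFcomps_attachedAt (W := Set.Iio n) hLn q hS hz),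
    exists_sat_iff_thetaMin g hL, hval]
  simp only [not_forall, not_not, exists_prop]
  constructor
  · rintro ⟨⟨y, P⟩, hp, hmem⟩
    exact ⟨y, P, mem_negBodies.mp hp, (hpos hp).sat_iff _ |>.mpr hmem⟩
  · rintro ⟨y, P, hp, hsat⟩
    exact ⟨(y, P), mem_negBodies.mpr hp, (hpos (mem_negBodies.mpr hp)).sat_iff _ |>.mp hsat⟩

theorem freshFrom_minCore (L : List (ℕ × MF Λ (ℕ × ℕ))) (u n : ℕ) :
    (minCore L u n).FreshFrom n :=
  freshFrom_posToKrAny _ n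

theorem fst_mem_of_mem_negBodies {L : List (ℕ × MF Λ (ℕ × ℕ))} {W : Set ℕ} (hW : ∀ p ∈ L, p.1 ∈ W)
    {p : ℕ × MF Λ (ℕ × ℕ)} (hp : p ∈ negBodies L) : p.1 ∈ W :=
  hW (p.1, .neg p.2) (mem_negBodies.mp hp)

theorem fv_minCore {L : List (ℕ × MF Λ (ℕ × ℕ))} {W : Set ℕ} (hW : ∀ p ∈ L, p.1 ∈ W) {u : ℕ}
    (hu : u ∈ W) (n : ℕ) : (minCore L u n).fv ⊆ W :=
  fv_posToKrAny hu (fun q _ hS => evars_subset_of_mem_KFcomps_attachedAt hW q hS)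
    (fun _ hp => fst_mem_of_mem_negBodies hW hp) n

theorem atomsAll_minCore {L : List (ℕ × MF Λ (ℕ × ℕ))} {W : Set ℕ} (hW : ∀ p ∈ L, p.1 ∈ W)
    {u : ℕ} (hu : u ∈ W) (n : ℕ) : (minCore L u n).AtomsAll (SafeIn W) :=
  atomsAll_posToKrAny hu
    (fun q _ hS => ⟨safe_of_mem_KFcomps hS, evars_subset_of_mem_KFcomps_attachedAt hW q hS⟩) _ n

end MinimalCore

section Correspondent
variable {Λ : Type u}

open KrF

noncomputable def treeCorr (t : BuiltT Λ (ℕ × ℕ)) (x m : ℕ) : KrF Λ :=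
  t.pre x m (minCore (t.points x m) x (m + t.size))

theorem holds_treeCorr (F : Frame Λ) {t : BuiltT Λ (ℕ × ℕ)} (ht : t.Ok boxOrNeg) {x m : ℕ}
    (hx : x < m) (g : ℕ → F.W) :
    (treeCorr t x m).holds F g ↔ ∀ θ, ¬ sat F θ (g x) t.formula := by
  have hLn (p) (hp : p ∈ t.points x m) : p.1 < m + t.size := by
    have := BuiltT.mem_points hp
    omega
  simp only [treeCorr, BuiltT.holds_pre, holds_minCore F (fun p hp => ht.mem_points hp) hLn,
    BuiltT.sat_formula_iff F _ t hx, not_exists, not_and]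
  exact ⟨fun h θ g' hr => h g' hr θ, fun h g' hr θ => h θ g' hr⟩

theorem fst_mem_of_mem_points {t : BuiltT Λ (ℕ × ℕ)} {x m : ℕ} {p : ℕ × MF Λ (ℕ × ℕ)}
    (hp : p ∈ t.points x m) : p.1 ∈ insert x (Set.Ico m (m + t.size)) := by
  rcases BuiltT.mem_points hp with h | h
  exacts [Or.inl h, Or.inr h]

theorem freshFrom_treeCorr (t : BuiltT Λ (ℕ × ℕ)) (x m : ℕ) : (treeCorr t x m).FreshFrom m :=
  t.freshFrom_pre x (freshFrom_minCore _ _ _)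

theorem fv_treeCorr (t : BuiltT Λ (ℕ × ℕ)) {x m : ℕ} (hx : x < m) :
    (treeCorr t x m).fv ⊆ {x} := by
  refine (t.fv_pre_subset x m _).trans (Set.insert_subset rfl fun z ⟨hz, hzI⟩ => ?_)
  rcases fv_minCore (fun _ => fst_mem_of_mem_points) (Set.mem_insert x _) _ hz with rfl | hz'
  exacts [rfl, absurd hz' hzI]

theorem gkok_treeCorr (t : BuiltT Λ (ℕ × ℕ)) {x m : ℕ} {U : Set ℕ} (hxU : x ∈ U) :
    (treeCorr t x m).GKok U false := by
  refine t.gkok_pre x m (gkok_of_atomsAll (AtomsAll.mono (fun E hE => hE.2.trans ?_)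
    (atomsAll_minCore (fun _ => fst_mem_of_mem_points) (Set.mem_insert x _) _)) false)
  exact Set.insert_subset (Or.inl hxU) Set.subset_union_right

theorem atomsAll_treeCorr (t : BuiltT Λ (ℕ × ℕ)) (x m : ℕ) : (treeCorr t x m).AtomsAll Safe :=
  t.atomsAll_pre x m (AtomsAll.mono (fun _ hE => hE.1)
    (atomsAll_minCore (fun _ => fst_mem_of_mem_points) (Set.mem_insert x _) _))

noncomputable def treesCorr : List (BuiltT Λ (ℕ × ℕ)) → ℕ → ℕ → KrF Λ
  | [], x, _ => verum x
  | t :: ts, x, m => .and (treeCorr t x m) (treesCorr ts x ((treeCorr t x m).freshAfter m))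

theorem holds_treesCorr (F : Frame Λ) {ts : List (BuiltT Λ (ℕ × ℕ))} (hts : ∀ t ∈ ts, t.Ok boxOrNeg)
    {x m : ℕ} (hx : x < m) (g : ℕ → F.W) :
    (treesCorr ts x m).holds F g ↔ ∀ t ∈ ts, ∀ θ, ¬ sat F θ (g x) t.formula := by
  induction ts generalizing m with
  | nil => simp [treesCorr]
  | cons t ts ih =>
    simp only [treesCorr, holds, holds_treeCorr F (hts t List.mem_cons_self) hx,
      ih (fun t ht => hts t (.tail _ ht)) (hx.trans_le (le_freshAfter _ m)),
      List.forall_mem_cons]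

theorem freshFrom_treesCorr (ts : List (BuiltT Λ (ℕ × ℕ))) (x m : ℕ) :
    (treesCorr ts x m).FreshFrom m := by
  induction ts generalizing m with
  | nil => exact .verum x m
  | cons t ts ih => exact .and (freshFrom_treeCorr t x m) (ih _)

theorem fv_treesCorr (ts : List (BuiltT Λ (ℕ × ℕ))) {x m : ℕ} (hx : x < m) :
    (treesCorr ts x m).fv = {x} := by
  induction ts generalizing m with
  | nil => simp [treesCorr, verum, fv, LExp.evars]
  | cons t ts ih =>
    simp only [treesCorr, fv, ih (hx.trans_le (le_freshAfter _ m))]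
    exact Set.union_eq_right.mpr (fv_treeCorr t hx)

theorem gkok_treesCorr (ts : List (BuiltT Λ (ℕ × ℕ))) {x m : ℕ} {U : Set ℕ} (hxU : x ∈ U) :
    (treesCorr ts x m).GKok U false := by
  induction ts generalizing m with
  | nil => simpa [treesCorr, verum, GKok, LExp.evars] using hxU
  | cons t ts ih => exact ⟨gkok_treeCorr t hxU, ih⟩

theorem atomsAll_treesCorr (ts : List (BuiltT Λ (ℕ × ℕ))) (x m : ℕ) :
    (treesCorr ts x m).AtomsAll Safe := by
  induction ts generalizing m with
  | nil => exact ⟨.var x, RfwSafe.var x⟩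
  | cons t ts ih => exact ⟨atomsAll_treeCorr t x m, ih _⟩

noncomputable def correspondent : MF Λ (ℕ × ℕ) → ℕ → ℕ → KrF Λ
  | .imp a _, x, m => treesCorr (dnf a) x m
  | .box l a, x, m => .all m l x (correspondent a m (m + 1))
  | .and a b, x, m =>
    .and (correspondent a x m) (correspondent b x ((correspondent a x m).freshAfter m))
  | .or a b, x, m =>
    .or (correspondent a x m) (correspondent b x ((correspondent a x m).freshAfter m))
  | _, x, _ => falsum x

theorem holds_correspondent (F : Frame Λ) {φ : MF Λ (ℕ × ℕ)} (hφ : GSF φ) {x m : ℕ} (hx : x < m)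
    (g : ℕ → F.W) : (correspondent φ x m).holds F g ↔ ∀ θ, sat F θ (g x) φ := by
  induction hφ generalizing x m g with
  | impl ha =>
    simp only [correspondent, holds_treesCorr F ha.ok_dnf hx, sat, imp_false]
    constructor
    · intro h θ hsat
      obtain ⟨t, ht, hst⟩ := (sat_iff_exists_dnf F θ _ (g x)).mp hsat
      exact h t ht θ hst
    · exact fun h t ht θ hst => h θ ((sat_iff_exists_dnf F θ _ (g x)).mpr ⟨t, ht, hst⟩)
  | box l _ ih =>
    simp only [correspondent, holds, ih (Nat.lt_succ_self m), Function.update_self, sat]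
    grind
  | @and a _ _ _ iha ihb =>
    simp only [correspondent, holds, iha hx, ihb (hx.trans_le (le_freshAfter _ m)), sat, forall_and]
  | @or a b _ _ hdisj iha ihb =>
    simp only [correspondent, holds, iha hx, ihb (hx.trans_le (le_freshAfter _ m)), sat]
    refine ⟨fun h θ => h.imp (· θ) (· θ), fun h => ?_⟩
    by_contra! hcon
    obtain ⟨⟨θa, ha⟩, ⟨θb, hb⟩⟩ := hcon
    classical
    -- the variables of `a` and `b` are disjoint, so `θa` and `θb` glue to one valuation
    let θ q := if q ∈ a.vars then θa q else θb q
    rcases h θ with h | h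
    · exact ha ((sat_congr a (fun q hq => if_pos hq) _).mp h)
    · refine hb ((sat_congr b (fun q hq => if_neg fun hqa => ?_) _).mp h)
      exact (Set.eq_empty_iff_forall_notMem.mp hdisj) q ⟨hqa, hq⟩

theorem freshFrom_correspondent (φ : MF Λ (ℕ × ℕ)) (x m : ℕ) :
    (correspondent φ x m).FreshFrom m := by
  induction φ generalizing x m with
  | imp a _ => exact freshFrom_treesCorr _ x m
  | box l a ih => exact .all l x (ih m (m + 1))
  | and _ _ iha ihb => exact .and (iha x m) (ihb x _)
  | or _ _ iha ihb => exact .or (iha x m) (ihb x _)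
  | var | top | bot | neg | dia => exact .falsum x m

theorem fv_correspondent (φ : MF Λ (ℕ × ℕ)) {x m : ℕ} (hx : x < m) : (correspondent φ x m).fv =
    {x} := by
  induction φ generalizing x m with
  | imp a _ => exact fv_treesCorr _ hx
  | box l a ih =>
    simp [correspondent, fv, ih (Nat.lt_succ_self m)]
  | and _ _ iha ihb | or _ _ iha ihb =>
    simp only [correspondent, fv, iha hx, ihb (hx.trans_le (le_freshAfter _ m)), Set.union_self]
  | var | top | bot | neg | dia => simp [correspondent, falsum, fv, LExp.evars]

theorem gkok_correspondent (φ : MF Λ (ℕ × ℕ)) {x m : ℕ} {U : Set ℕ} (hxU : x ∈ U) :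
    (correspondent φ x m).GKok U false := by
  induction φ generalizing x m U with
  | imp a _ => exact gkok_treesCorr _ hxU
  | box l a ih => exact ih (Set.mem_insert m U)
  | and _ _ iha ihb | or _ _ iha ihb => exact ⟨iha hxU, ihb hxU⟩
  | var | top | bot | neg | dia => simpa [correspondent, falsum, GKok, LExp.evars] using hxU

theorem atomsAll_correspondent (φ : MF Λ (ℕ × ℕ)) (x m : ℕ) :
    (correspondent φ x m).AtomsAll Safe := by
  induction φ generalizing x m with
  | imp a _ => exact atomsAll_treesCorr _ x m
  | box l a ih => exact ih m (m + 1)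
  | and _ _ iha ihb | or _ _ iha ihb => exact ⟨iha x m, ihb x _⟩
  | var | top | bot | neg | dia => exact ⟨.interL (.var x), RfwSafe.inter (.var x) .bot⟩

end Correspondent

/-- every generalized Sahlqvist formula has a local first-order correspondent
which is a generalized Kracht formula (read via the `#`-translation of its atoms). -/
theorem statement14 {Λ : Type u} (φ : MF Λ (ℕ × ℕ)) (hφ : GSF φ) :
    ∃ (α : KrF Λ) (x₀ : ℕ), IsGenKracht α x₀ ∧
      ∀ (F : Frame Λ) (w : F.W),
        (∀ θ : ℕ × ℕ → Set F.W, sat F θ w φ) ↔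
          ∀ g : ℕ → F.W, g x₀ = w → KrF.holds F g α := by
  set α : KrF Λ := correspondent φ 0 1
  have hfv : α.fv = {0} := fv_correspondent φ Nat.one_pos
  have hfresh : α.FreshFrom 1 := freshFrom_correspondent φ 0 1
  have hclean : α.fv ∩ α.bv = ∅ := by
    rw [hfv, Set.singleton_inter_eq_empty]
    exact fun h => absurd (hfresh.2 0 h) (by omega)
  have hgk : α.GKok α.fv false := gkok_correspondent φ (by simp [hfv])
  refine ⟨α, 0, ⟨⟨⟨hclean, hfresh.1⟩, atomsAll_correspondent φ 0 1, hgk⟩, hfv⟩, fun F w => ?_⟩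
  have hholds := holds_correspondent F hφ Nat.one_pos
  exact ⟨fun h g hg => (hholds g).mpr (hg ▸ h), fun h => (hholds fun _ => w).mp (h _ rfl)⟩
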